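/- Let ℓ be an odd prime and m ≥ 1. Then every element of R(ℓ^{2m+1}) has square discriminant, and there is no primitive vector in (Z/ℓ^{2m+1}Z)² that is a simultaneous eigenvector of all elements of R(ℓ^{2m+1}). -/

import Mathlib

/-! Put `n = ℓ ^ (2m)`: then `n ≠ 0` but `n ^ 2 = 0`, and `r ≡ t (mod ℓ ^ (m+1))` makes
`(r - t) ^ 2 = 0`. For `ε = 1` the discriminant is `(r - t) ^ 2 + 4 n s ^ 2 = (2 ℓ ^ m s) ^ 2`.
For `ε = -1` it is `(r + t) ^ 2 - 4 n s ^ 2`; invertibility of `g` makes `r` a unit, hence so is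
`r + t = 2r - (r - t)`, and for a unit `a` and a square-zero `x` one has
`a ^ 2 - 4x = (a - 2x / a) ^ 2`. A primitive vector has a unit coordinate, and a common
eigenvector of `diag(1, -1)` and `!![1, 1; n, 1]` with a unit coordinate forces `n = 0`. -/

/-- A vector in `(ZMod N)²` is primitive (w.r.t. `ℓ ∣ N`) if its reduction
modulo `ℓ` is nonzero. -/
def IsPrimitive (ℓ N : ℕ) (h : ℓ ∣ N) (v : Fin 2 → ZMod N) : Prop :=
  (fun i => ZMod.castHom h (ZMod ℓ) (v i)) ≠ 0

/-- Membership in the group `R(ℓ^(2m+1))`: matrices `[[r, s],[ε·ℓ^(2m)·s, ε·t]]` with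
`ε = ±1` and `r ≡ t (mod ℓ^(m+1))`. -/
def Rmem (ℓ m : ℕ) (g : Matrix (Fin 2) (Fin 2) (ZMod (ℓ ^ (2 * m + 1)))) : Prop :=
  ∃ (r s t ε : ZMod (ℓ ^ (2 * m + 1))), (ε = 1 ∨ ε = -1) ∧
    g = !![r, s; ε * (ℓ : ZMod (ℓ ^ (2 * m + 1))) ^ (2 * m) * s, ε * t] ∧
    ZMod.castHom (pow_dvd_pow ℓ (by omega : m + 1 ≤ 2 * m + 1)) (ZMod (ℓ ^ (m + 1))) r =
      ZMod.castHom (pow_dvd_pow ℓ (by omega : m + 1 ≤ 2 * m + 1)) (ZMod (ℓ ^ (m + 1))) t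


open Matrix

namespace ZMod

theorem isUnit_of_castHom_ne_zero {p d : ℕ} (hp : p.Prime) (hd : d ≠ 0) {x : ZMod (p ^ d)}
    (hx : castHom (dvd_pow_self p hd) (ZMod p) x ≠ 0) : IsUnit x := by
  have : NeZero (p ^ d) := ⟨pow_ne_zero d hp.ne_zero⟩
  rw [← natCast_zmod_val x, isUnit_natCast_iff_not_dvd_pow hp (Nat.pos_of_ne_zero hd)]
  rwa [castHom_apply, cast_eq_val, Ne, natCast_eq_zero_iff] at hx

theorem sq_eq_zero_of_castHom_eq_zero {n N : ℕ} [NeZero N] (hnN : n ∣ N) (hN : N ∣ n ^ 2)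
    {x : ZMod N} (hx : castHom hnN (ZMod n) x = 0) : x ^ 2 = 0 := by
  rw [castHom_apply, cast_eq_val, natCast_eq_zero_iff] at hx
  rw [← natCast_zmod_val x, ← Nat.cast_pow, natCast_eq_zero_iff]
  exact hN.trans (pow_dvd_pow_of_dvd hx 2)

theorem natCast_pow_ne_zero_of_lt {p m n : ℕ} (hp : 1 < p) (h : m < n) :
    (p ^ m : ZMod (p ^ n)) ≠ 0 := by
  rw [← Nat.cast_pow, Ne, natCast_eq_zero_iff, Nat.pow_dvd_pow_iff_le_right hp]
  omega

theorem isUnit_two_of_prime_pow {p d : ℕ} (hp : p.Prime) (hp2 : p ≠ 2) :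
    IsUnit (2 : ZMod (p ^ d)) := by
  exact_mod_cast (isUnit_iff_coprime 2 _).2
    (Nat.Coprime.pow_right _ ((Nat.coprime_primes Nat.prime_two hp).2 hp2.symm))

end ZMod

theorem IsPrimitive.isUnit_zero_or_isUnit_one {ℓ k : ℕ} (hℓ : ℓ.Prime) (hk : k ≠ 0)
    {v : Fin 2 → ZMod (ℓ ^ k)} (hv : IsPrimitive ℓ (ℓ ^ k) (dvd_pow_self ℓ hk) v) :
    IsUnit (v 0) ∨ IsUnit (v 1) := by
  obtain ⟨i, hi⟩ := Function.ne_iff.mp hv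
  exact Fin.exists_fin_two (p := fun i ↦ IsUnit (v i)) |>.1
    ⟨i, ZMod.isUnit_of_castHom_ne_zero hℓ hk hi⟩

section CommRing

variable {R : Type*} [CommRing R]

theorem isSquare_sq_sub_four_mul {a x : R} (ha : IsUnit a) (hx : x ^ 2 = 0) :
    IsSquare (a ^ 2 - 4 * x) := by
  obtain ⟨u, rfl⟩ := ha
  rw [isSquare_iff_exists_sq]
  exact ⟨u - 2 * x * ↑u⁻¹,
    by linear_combination (4 * x) * u.mul_inv - 4 * (↑u⁻¹ : R) ^ 2 * hx⟩

theorem isUnit_add_of_sq_sub_eq_zero (h2 : IsUnit (2 : R)) {r t : R} (hr : IsUnit r)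
    (hrt : (r - t) ^ 2 = 0) : IsUnit (r + t) := by
  have hnil : IsNilpotent (-(r - t)) := ⟨2, by rw [neg_sq, hrt]⟩
  simpa [two_mul] using hnil.isUnit_add_left_of_commute (h2.mul hr) (Commute.all _ _)

theorem eq_zero_of_common_eigenvector (h2 : IsUnit (2 : R)) {n lam mu : R} {v : Fin 2 → R}
    (hv : IsUnit (v 0) ∨ IsUnit (v 1)) (hA : !![1, 0; 0, -1] *ᵥ v = lam • v)
    (hB : !![1, 1; n, 1] *ᵥ v = mu • v) : n = 0 := by
  have hA0 : v 0 = lam * v 0 := by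
    simpa [mulVec, dotProduct, Fin.sum_univ_two] using congrFun hA 0
  have hA1 : -v 1 = lam * v 1 := by
    simpa [mulVec, dotProduct, Fin.sum_univ_two] using congrFun hA 1
  have hB0 : v 0 + v 1 = mu * v 0 := by
    simpa [mulVec, dotProduct, Fin.sum_univ_two] using congrFun hB 0
  have hB1 : n * v 0 + v 1 = mu * v 1 := by
    simpa [mulVec, dotProduct, Fin.sum_univ_two] using congrFun hB 1
  rcases hv with hv0 | hv1
  · have hlam : lam = 1 := hv0.mul_right_cancel (by linear_combination -hA0)
    have hv1 : v 1 = 0 := h2.mul_left_cancel (by linear_combination -hA1 - v 1 * hlam)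
    have hmu : mu = 1 := hv0.mul_right_cancel (by linear_combination -hB0 + hv1)
    exact hv0.mul_right_cancel (by linear_combination hB1 + v 1 * hmu)
  · have hlam : lam = -1 := hv1.mul_right_cancel (by linear_combination -hA1)
    have hv0 : v 0 = 0 := h2.mul_left_cancel (by linear_combination hA0 + v 0 * hlam)
    have hv1' : v 1 = 0 := by linear_combination hB0 - hv0 + mu * hv0
    exact hv1.mul_right_cancel (by rw [hv1']; ring)

end CommRing

section Rmem

variable {ℓ m : ℕ}

theorem Rmem.isSquare_discr (hℓ : ℓ.Prime) (hℓodd : ℓ ≠ 2) (hm : 1 ≤ m)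
    {g : Matrix (Fin 2) (Fin 2) (ZMod (ℓ ^ (2 * m + 1)))} (hg : Rmem ℓ m g)
    (hdet : IsUnit g.det) :
    IsSquare (g.trace ^ 2 - 4 * g.det) := by
  have : NeZero (ℓ ^ (2 * m + 1)) := ⟨pow_ne_zero _ hℓ.ne_zero⟩
  obtain ⟨r, s, t, ε, hε, rfl, hrt⟩ := hg
  have hrt2 : (r - t) ^ 2 = 0 :=
    ZMod.sq_eq_zero_of_castHom_eq_zero (pow_dvd_pow ℓ (by omega : m + 1 ≤ 2 * m + 1))
      (by rw [← pow_mul]; exact pow_dvd_pow ℓ (by omega)) (by rw [map_sub, hrt, sub_self])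
  rw [trace_fin_two_of, det_fin_two_of] at *
  set L := (ℓ : ZMod (ℓ ^ (2 * m + 1)))
  have hn : (L ^ (2 * m) * s ^ 2) ^ 2 = 0 := by
    rw [mul_pow, ← pow_mul, ZMod.natCast_pow_eq_zero_of_le ℓ (by omega), zero_mul]
  rcases hε with rfl | rfl
  · exact ⟨2 * L ^ m * s, by linear_combination hrt2⟩
  · have hnil : IsNilpotent (-(L ^ (2 * m) * s ^ 2)) := ⟨2, by rw [neg_sq, hn]⟩
    have hr : IsUnit r := by
      refine isUnit_of_mul_isUnit_left (y := -t) ?_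
      convert hnil.isUnit_add_left_of_commute hdet (Commute.all _ _) using 1
      ring
    obtain ⟨w, hw⟩ := isSquare_sq_sub_four_mul
      (isUnit_add_of_sq_sub_eq_zero (ZMod.isUnit_two_of_prime_pow hℓ hℓodd) hr hrt2) hn
    exact ⟨w, by linear_combination hw⟩

theorem rmem_diag_one_neg_one : Rmem ℓ m !![1, 0; 0, -1] :=
  ⟨1, 0, 1, -1, Or.inr rfl, by simp, rfl⟩

theorem rmem_one_one_pow_one : Rmem ℓ m !![1, 1; (ℓ : ZMod (ℓ ^ (2 * m + 1))) ^ (2 * m), 1] :=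
  ⟨1, 1, 1, 1, Or.inl rfl, by simp, rfl⟩

end Rmem

/-- Every element of `R(ℓ^(2m+1))` has square discriminant, and there is
no primitive vector that is a simultaneous eigenvector of all elements of `R(ℓ^(2m+1))`. -/
theorem stmt_11 (ℓ m : ℕ) (hℓ : ℓ.Prime) (hℓodd : ℓ ≠ 2) (hm : 1 ≤ m) :
    (∀ g : Matrix.GeneralLinearGroup (Fin 2) (ZMod (ℓ ^ (2 * m + 1))),
      Rmem ℓ m g.val → ∃ s : ZMod (ℓ ^ (2 * m + 1)),
        (Matrix.trace g.val) ^ 2 - 4 * g.val.det = s ^ 2) ∧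
    ¬ ∃ v : Fin 2 → ZMod (ℓ ^ (2 * m + 1)),
      IsPrimitive ℓ (ℓ ^ (2 * m + 1)) (dvd_pow_self ℓ (by omega : 2 * m + 1 ≠ 0)) v ∧
      ∀ g : Matrix.GeneralLinearGroup (Fin 2) (ZMod (ℓ ^ (2 * m + 1))),
        Rmem ℓ m g.val → ∃ lam : ZMod (ℓ ^ (2 * m + 1)), g.val.mulVec v = lam • v := by
  refine ⟨fun g hg ↦ (isSquare_iff_exists_sq _).1
    (hg.isSquare_discr hℓ hℓodd hm ((isUnit_iff_isUnit_det _).1 g.isUnit)), ?_⟩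
  rintro ⟨v, hv, hcommon⟩
  have hA : IsUnit (!![1, 0; 0, -1] : Matrix (Fin 2) (Fin 2) (ZMod (ℓ ^ (2 * m + 1)))) := by
    simp [isUnit_iff_isUnit_det, det_fin_two_of]
  have hB : IsUnit !![1, 1; (ℓ : ZMod (ℓ ^ (2 * m + 1))) ^ (2 * m), 1] := by
    rw [isUnit_iff_isUnit_det, det_fin_two_of, mul_one, one_mul]
    exact IsNilpotent.isUnit_one_sub
      ⟨2, by rw [← pow_mul, ZMod.natCast_pow_eq_zero_of_le ℓ (by omega)]⟩
  obtain ⟨lam, hlam⟩ := hcommon hA.unit rmem_diag_one_neg_one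
  obtain ⟨mu, hmu⟩ := hcommon hB.unit rmem_one_one_pow_one
  exact ZMod.natCast_pow_ne_zero_of_lt hℓ.one_lt (by omega) <|
    eq_zero_of_common_eigenvector (ZMod.isUnit_two_of_prime_pow hℓ hℓodd)
      (hv.isUnit_zero_or_isUnit_one hℓ (by omega)) hlam hmu
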